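/- Let y ∈ ℝ^N, let K and K̃ be N×N real symmetric positive semidefinite matrices, let σ > 0, and let α, α̃ ∈ ℝ^N be the unique solutions of (K + σ²I)α = y and (K̃ + σ²I)α̃ = y. Let μ = Kα be the vector of true posterior means at the data points and μ̃ = K̃α̃ its approximation. Then ‖μ̃ − μ‖ ≤ (‖K̃ − K‖ / σ²) · ‖y‖, where ‖·‖ denotes the Euclidean norm for vectors and the operator (spectral) norm for matrices. -/

import Mathlib

/-- Operator (spectral) norm of a real square matrix, induced by the Euclidean norm. -/
noncomputable def opNorm {N : ℕ} (A : Matrix (Fin N) (Fin N) ℝ) : ℝ :=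
  ‖Matrix.toEuclideanCLM (𝕜 := ℝ) A‖

/-- Euclidean norm of a vector in `ℝ^N`. -/
noncomputable def vecNorm {N : ℕ} (v : Fin N → ℝ) : ℝ :=
  Real.sqrt (∑ i, v i ^ 2)

/-!
From `(K + σ²I)α = y` we get `μ = y - σ²α`, so `μ̃ - μ = σ²(α - α̃)`, and subtracting the two
systems gives `(K + σ²I)(α - α̃) = (K̃ - K)α̃`. For positive semidefinite `M`,
`⟪(M + σ²I)v, v⟫ ≥ σ²‖v‖²`, so Cauchy–Schwarz yields `‖(M + σ²I)v‖ ≥ σ²‖v‖`. Hence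
`σ²‖α - α̃‖ ≤ ‖K̃ - K‖‖α̃‖` and `σ²‖α̃‖ ≤ ‖y‖`.
-/

open Matrix

theorem mul_norm_le_norm_add_smul_of_inner_nonneg {E : Type*} [NormedAddCommGroup E]
    [InnerProductSpace ℝ E] (c : ℝ) {u v : E} (h : 0 ≤ inner ℝ u v) :
    c * ‖v‖ ≤ ‖u + c • v‖ := by
  rcases eq_or_ne v 0 with rfl | hv0
  · simp
  have hv : 0 < ‖v‖ := norm_pos_iff.mpr hv0
  refine le_of_mul_le_mul_right ?_ hv
  calc c * ‖v‖ * ‖v‖ ≤ inner ℝ u v + c * inner ℝ v v := by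
        rw [real_inner_self_eq_norm_mul_norm]; linarith
    _ = inner ℝ (u + c • v) v := by rw [inner_add_left, real_inner_smul_left]
    _ ≤ ‖u + c • v‖ * ‖v‖ := real_inner_le_norm _ _

theorem vecNorm_eq_norm_toLp {N : ℕ} (v : Fin N → ℝ) : vecNorm v = ‖WithLp.toLp 2 v‖ := by
  simp [vecNorm, EuclideanSpace.norm_eq]

theorem vecNorm_smul {N : ℕ} (c : ℝ) (v : Fin N → ℝ) : vecNorm (c • v) = |c| * vecNorm v := by
  simp only [vecNorm_eq_norm_toLp, WithLp.toLp_smul, norm_smul, Real.norm_eq_abs]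

theorem vecNorm_mulVec_le {N : ℕ} (A : Matrix (Fin N) (Fin N) ℝ) (v : Fin N → ℝ) :
    vecNorm (A *ᵥ v) ≤ opNorm A * vecNorm v := by
  simpa [vecNorm_eq_norm_toLp, opNorm] using
    (toEuclideanCLM (𝕜 := ℝ) A).le_opNorm (WithLp.toLp 2 v)

theorem add_smul_one_mulVec {n R : Type*} [Fintype n] [DecidableEq n] [Semiring R]
    (M : Matrix n n R) (c : R) (v : n → R) : (M + c • 1) *ᵥ v = M *ᵥ v + c • v := by
  rw [add_mulVec, smul_mulVec, one_mulVec]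

theorem Matrix.PosSemidef.mul_vecNorm_le_vecNorm_add_smul_one_mulVec {N : ℕ}
    {M : Matrix (Fin N) (Fin N) ℝ} (hM : M.PosSemidef) (c : ℝ) (v : Fin N → ℝ) :
    c * vecNorm v ≤ vecNorm ((M + c • 1) *ᵥ v) := by
  rw [add_smul_one_mulVec, vecNorm_eq_norm_toLp, vecNorm_eq_norm_toLp, WithLp.toLp_add,
    WithLp.toLp_smul]
  refine mul_norm_le_norm_add_smul_of_inner_nonneg c ?_
  simpa [EuclideanSpace.inner_toLp_toLp] using hM.dotProduct_mulVec_nonneg v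

theorem stmt_10 (N : ℕ) (y : Fin N → ℝ) (K Ktil : Matrix (Fin N) (Fin N) ℝ)
    (hK : K.PosSemidef) (hKt : Ktil.PosSemidef) (σ : ℝ) (hσ : 0 < σ)
    (α αt : Fin N → ℝ)
    (hα : (K + σ ^ 2 • 1).mulVec α = y) (hαt : (Ktil + σ ^ 2 • 1).mulVec αt = y)
    (μ μt : Fin N → ℝ) (hμ : μ = K.mulVec α) (hμt : μt = Ktil.mulVec αt) :
    vecNorm (μt - μ) ≤ opNorm (Ktil - K) / σ ^ 2 * vecNorm y := by
  have hαt_le : σ ^ 2 * vecNorm αt ≤ vecNorm y :=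
    hαt ▸ hKt.mul_vecNorm_le_vecNorm_add_smul_one_mulVec (σ ^ 2) αt
  rw [add_smul_one_mulVec] at hα hαt
  have hσ2 : 0 < σ ^ 2 := by positivity
  have hdiff : μt - μ = σ ^ 2 • (α - αt) := by
    rw [hμ, hμt, smul_sub, eq_sub_of_add_eq hα, eq_sub_of_add_eq hαt]; abel
  have hres : (K + σ ^ 2 • 1) *ᵥ (α - αt) = (Ktil - K) *ᵥ αt := by
    rw [add_smul_one_mulVec, sub_mulVec, mulVec_sub, smul_sub]
    linear_combination hα - hαt
  rw [div_mul_eq_mul_div, le_div_iff₀ hσ2]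
  calc vecNorm (μt - μ) * σ ^ 2 = σ ^ 2 * (σ ^ 2 * vecNorm (α - αt)) := by
        rw [hdiff, vecNorm_smul, abs_of_pos hσ2]; ring
    _ ≤ σ ^ 2 * vecNorm ((Ktil - K) *ᵥ αt) := by
        rw [← hres]; gcongr; exact hK.mul_vecNorm_le_vecNorm_add_smul_one_mulVec _ _
    _ ≤ σ ^ 2 * (opNorm (Ktil - K) * vecNorm αt) := by gcongr; exact vecNorm_mulVec_le _ _
    _ = opNorm (Ktil - K) * (σ ^ 2 * vecNorm αt) := by ring
    _ ≤ opNorm (Ktil - K) * vecNorm y := by gcongr; exact norm_nonneg _
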